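/- Let (C_β) be a global square sequence. Let m be a natural number, let α be an uncountable regular cardinal, and let C be a closed set of ordinals, each greater than α^{+m}, of order type α^{+m}+1. Then C ∩ {β : β is a singular limit ordinal} contains a closed subset of order type α^{+m}+1. -/

import Mathlib

open Set

/-- The order type of a set of ordinals: the unique ordinal `o` such that
`Set.Iio o` is order-isomorphic to `X` (or `0` if no such ordinal exists,
which can only happen for proper-class-sized `X`). -/
noncomputable def otype.{u} (X : Set Ordinal.{u}) : Ordinal.{u} :=
  sInf {o : Ordinal.{u} | Nonempty (Set.Iio o ≃o X)}

/-- A set (or class) of ordinals is closed if it contains the supremum of every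
nonempty bounded-above subset of itself. -/
def IsClosedSet (C : Set Ordinal) : Prop :=
  ∀ s : Set Ordinal, s ⊆ C → s.Nonempty → BddAbove s → sSup s ∈ C

/-- `limPts X` is the class of limit ordinals `γ` with `sup (X ∩ γ) = γ`. -/
def limPts (X : Set Ordinal) : Set Ordinal :=
  {γ | Order.IsSuccLimit γ ∧ sSup (X ∩ Set.Iio γ) = γ}

/-- An ordinal is singular if it is a limit ordinal whose cofinality is smaller
than itself. -/
def IsSing (β : Ordinal) : Prop := Order.IsSuccLimit β ∧ β.cof.ord < β

/-- `X` is a closed unbounded subset of the ordinal `β`. -/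
def IsClubIn (X : Set Ordinal) (β : Ordinal) : Prop :=
  X ⊆ Set.Iio β ∧
    (∀ s : Set Ordinal, s ⊆ X → s.Nonempty → sSup s < β → sSup s ∈ X) ∧
    ∀ η < β, ∃ x ∈ X, η < x

/-- A global square sequence. -/
structure GlobalSquare where
  C : Ordinal → Set Ordinal
  club : ∀ β, IsSing β → IsClubIn (C β) β
  ot_lt : ∀ β, IsSing β → otype (C β) < β
  coh : ∀ β, IsSing β → ∀ γ ∈ limPts (C β), γ < β →
    IsSing γ ∧ C γ = C β ∩ Set.Iio γ

/-- `ν` is the function `n` associated to the global square sequence `S`. -/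
def IsAssocFn (S : GlobalSquare) (ν : Ordinal → ℕ) : Prop :=
  open scoped Classical in
  ∀ β, IsSing β →
    ν β = if IsSing (otype (S.C β)) then ν (otype (S.C β)) + 1 else 0

/-- Iterated cardinal successor: `succIt α k = α⁺...⁺` (`k` times). -/
noncomputable def succIt (α : Cardinal) : ℕ → Cardinal
  | 0 => α
  | k + 1 => Order.succ (succIt α k)

/-- An ordinal which is (the ordinal of) a regular cardinal. -/
def IsRegOrd (α : Ordinal) : Prop := ∃ κ : Cardinal, κ.IsRegular ∧ α = κ.ord

/-- End-extension ordering: `EndExt p q` means `p ≤ q`, i.e. `p` end-extends `q`. -/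
def EndExt (p q : Set Ordinal) : Prop :=
  q ⊆ p ∧ ∀ x ∈ p \ q, ∀ y ∈ q, y < x

/-- The class forcing associated to a square sequence with associated function `ν`
and `k ∈ ℕ`: nonempty closed bounded sets of ordinals all of whose elements are
regular cardinals or singular of `ν`-value at least `k+1`. -/
def Pforcing (ν : Ordinal → ℕ) (k : ℕ) : Set (Set Ordinal) :=
  {p | p.Nonempty ∧ IsClosedSet p ∧ BddAbove p ∧
    ∀ α ∈ p, IsRegOrd α ∨ (IsSing α ∧ k + 1 ≤ ν α)}

/-!
Enumerate `C` increasingly as `⟨c_ξ : ξ ≤ κ⟩`, where `κ = α^{+m}`. Since `C` is closed, the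
enumeration is continuous, so for a limit `ξ` we get `cf(c_ξ) = cf(ξ) ≤ ξ ≤ κ < c_ξ`: every `c_ξ`
with `ξ` limit is singular. These `c_ξ` form a closed set, and as `κ` is an uncountable cardinal,
`ω · κ = κ`, so the limit ordinals `ω · (1 + ξ)`, `ξ ≤ κ`, have order type `κ + 1`.
-/

open Order Ordinal

theorem otype_eq_of_orderIso {o : Ordinal} {X : Set Ordinal} (h : Iio o ≃o X) : otype X = o := by
  have hunique : {o' : Ordinal | Nonempty (Iio o' ≃o X)} = {o} := by
    ext o'
    refine ⟨fun ⟨h'⟩ => ?_, by rintro rfl; exact ⟨h⟩⟩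
    have := type_eq.2 ⟨(h'.trans h.symm).toRelIsoLT⟩
    simpa [typein_ordinal] using this
  rw [otype, hunique, csInf_singleton]

theorem nonempty_orderIso_Iio_otype {X : Set Ordinal} (h : otype X ≠ 0) :
    Nonempty (Iio (otype X) ≃o X) := by
  have hne : {o : Ordinal | Nonempty (Iio o ≃o X)}.Nonempty :=
    Set.nonempty_iff_ne_empty.2 fun hempty => h (by rw [otype, hempty, Ordinal.sInf_empty])
  exact csInf_mem hne

theorem le_succIt (α : Cardinal) : ∀ m, α ≤ succIt α m
  | 0 => le_rfl
  | m + 1 => (le_succIt α m).trans (le_succ _)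

theorem isClosedSet_setOf_isSuccLimit : IsClosedSet {x : Ordinal | IsSuccLimit x} := by
  intro s hs hne hbdd
  by_contra hlim
  exact hlim (hs (csSup_mem_of_not_isSuccLimit (s := s) hne hbdd hlim))

namespace IsClosedSet

variable {δ : Ordinal} {C : Set Ordinal}

theorem apply_iSup (hC : IsClosedSet C) (e : Iio δ ≃o C) {ι : Sort*} [Nonempty ι]
    (f : ι → Iio δ) {η : Iio δ} (hη : (η : Ordinal) = ⨆ i, (f i : Ordinal)) :
    (e η : Ordinal) = ⨆ i, (e (f i) : Ordinal) := by
  have hg : StrictMono fun x => (e x : Ordinal) := (Subtype.strictMono_coe _).comp e.strictMono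
  have hfη : ∀ i, f i ≤ η := fun i => show (f i : Ordinal) ≤ η from
    hη ▸ le_ciSup (f := fun i => (f i : Ordinal)) ⟨δ, forall_mem_range.2 fun i => (f i).2.le⟩ i
  have hbdd : BddAbove (range fun i => (e (f i) : Ordinal)) :=
    ⟨e η, forall_mem_range.2 fun i => hg.monotone (hfη i)⟩
  obtain ⟨ζ, hζ⟩ : ∃ ζ, (e ζ : Ordinal) = ⨆ i, (e (f i) : Ordinal) :=
    ⟨e.symm ⟨_, hC _ (range_subset_iff.2 fun i => (e (f i)).2) (range_nonempty _) hbdd⟩,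
      by simp; rfl⟩
  have hηζ : η ≤ ζ := show η.1 ≤ ζ.1 from
    hη ▸ ciSup_le fun i => hg.le_iff_le.1 (hζ ▸ le_ciSup hbdd i)
  exact le_antisymm (hζ ▸ hg.monotone hηζ) (ciSup_le fun i => hg.monotone (hfη i))

theorem cof_apply (hC : IsClosedSet C) (e : Iio δ ≃o C) {x : Iio δ} (hx : IsSuccLimit x.1) :
    (e x : Ordinal).cof = x.1.cof := by
  have : Nonempty (Iio x.1) := ⟨⟨0, hx.bot_lt⟩⟩
  let f : Iio x.1 → Iio δ := fun i => ⟨i, (lt_trans i.2 x.2 : i.1 < δ)⟩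
  calc (e x : Ordinal).cof = (⨆ i, (e (f i) : Ordinal)).cof := by
        rw [hC.apply_iSup e f hx.iSup_Iio.symm]
    _ = x.1.cof := cof_iSup_Iio (fun i j hij => e.strictMono hij) hx.isSuccPrelimit

theorem isSing_apply (hC : IsClosedSet C) (e : Iio δ ≃o C) {x : Iio δ} (hx : IsSuccLimit x.1)
    (hlt : x.1 < e x) : IsSing (e x) := by
  have hcof := hC.cof_apply e hx
  exact ⟨one_lt_cof_iff.1 (hcof ▸ one_lt_cof_iff.2 hx), hcof ▸ (ord_cof_le x.1).trans_lt hlt⟩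

theorem image_orderIso (hC : IsClosedSet C) (e : Iio δ ≃o C) {T : Set Ordinal}
    (hT : IsClosedSet T) : IsClosedSet ((fun x : Iio δ => (e x : Ordinal)) '' {x | x.1 ∈ T}) := by
  have hg : StrictMono fun x => (e x : Ordinal) := (Subtype.strictMono_coe _).comp e.strictMono
  intro s hs hne hbdd
  have : Nonempty s := hne.to_subtype
  have hsC : s ⊆ C := fun z hz => by
    obtain ⟨x, -, rfl⟩ := hs hz
    exact (e x).2
  obtain ⟨ζ, hζ⟩ : ∃ ζ, (e ζ : Ordinal) = sSup s :=
    ⟨e.symm ⟨_, hC s hsC hne hbdd⟩, by simp⟩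
  choose f hfT hfe using fun z : s => hs z.2
  beta_reduce at hfe
  have hfζ : ∀ z, (f z : Ordinal) ≤ ζ := fun z =>
    hg.le_iff_le.1 (by rw [hfe, hζ]; exact le_csSup hbdd z.2)
  have hbddf : BddAbove (range fun z => (f z : Ordinal)) := ⟨ζ, forall_mem_range.2 hfζ⟩
  refine ⟨⟨⨆ z, (f z : Ordinal), (ciSup_le hfζ).trans_lt (mem_Iio.1 ζ.2)⟩,
    hT _ (range_subset_iff.2 hfT) (range_nonempty _) hbddf, ?_⟩
  beta_reduce
  rw [hC.apply_iSup e f rfl]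
  simp only [hfe]
  exact (sSup_eq_iSup' s).symm

end IsClosedSet

theorem omega0_mul_one_add_le {o ξ : Ordinal} (hω : ω ≤ o) (hmul : ω * o = o) (hξ : ξ ≤ o) :
    ω * (1 + ξ) ≤ o :=
  calc ω * (1 + ξ) ≤ ω * (1 + o) := by gcongr
    _ = o := by rw [one_add_of_omega0_le hω, hmul]

theorem isSuccLimit_omega0_mul_one_add (ξ : Ordinal) : IsSuccLimit (ω * (1 + ξ)) :=
  isSuccLimit_mul_left isSuccLimit_omega0 (zero_lt_one.trans_le le_self_add)

theorem exists_omega0_mul_one_add_eq {l : Ordinal} (hl : IsSuccLimit l) :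
    ∃ ξ ≤ l, ω * (1 + ξ) = l := by
  obtain ⟨q, rfl⟩ := isSuccPrelimit_iff_omega0_dvd.1 hl.isSuccPrelimit
  have hq : 1 ≤ q := one_le_iff_ne_zero.2 (right_ne_zero_of_mul hl.bot_lt.ne')
  exact ⟨q - 1, (sub_le_self q 1).trans (le_mul_right q omega0_pos),
    by rw [Ordinal.add_sub_cancel_of_le hq]⟩

noncomputable def iioAddOneOrderIsoSuccLimits {o : Ordinal} (hω : ω ≤ o) (hmul : ω * o = o) :
    Iio (o + 1) ≃o {x : Iio (o + 1) | IsSuccLimit x.1} :=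
  StrictMono.orderIsoOfSurjective
    (fun ξ => ⟨⟨ω * (1 + ξ.1),
      lt_add_one_iff.2 (omega0_mul_one_add_le hω hmul (lt_add_one_iff.1 ξ.2))⟩,
      isSuccLimit_omega0_mul_one_add ξ.1⟩)
    (fun ξ ζ h => show ω * (1 + ξ.1) < ω * (1 + ζ.1) by gcongr; exact omega0_pos)
    (fun ⟨⟨l, hl⟩, hlim⟩ =>
      let ⟨ξ, hξl, hξ⟩ := exists_omega0_mul_one_add_eq hlim
      ⟨⟨ξ, hξl.trans_lt hl⟩, by ext; exact hξ⟩)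

theorem closed_subset_of_singulars_general (m : ℕ)
    (α : Cardinal) (hunc : Cardinal.aleph0 < α)
    (C : Set Ordinal) (hclosed : IsClosedSet C)
    (hgt : ∀ x ∈ C, (succIt α m).ord < x)
    (hot : otype C = (succIt α m).ord + 1) :
    ∃ D : Set Ordinal, D ⊆ C ∩ {β | IsSing β} ∧
      IsClosedSet D ∧ otype D = (succIt α m).ord + 1 := by
  set o := (succIt α m).ord
  have hℵ : Cardinal.aleph0 < succIt α m := hunc.trans_le (le_succIt α m)
  have hω : ω < o := Cardinal.lt_ord.2 (by rwa [card_omega0])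
  have hmul : ω * o = o :=
    isPrincipal_mul_iff_mul_left_eq.1 (isPrincipal_mul_ord hℵ.le) ω omega0_pos hω
  obtain ⟨e⟩ : Nonempty (Iio (o + 1) ≃o C) := by
    rw [← hot]
    exact nonempty_orderIso_Iio_otype (by rw [hot]; simp)
  let g : Iio (o + 1) → Ordinal := fun x => e x
  have hg : StrictMono g := (Subtype.strictMono_coe _).comp e.strictMono
  refine ⟨g '' {x | IsSuccLimit x.1}, ?_,
    hclosed.image_orderIso e isClosedSet_setOf_isSuccLimit, ?_⟩
  · rintro _ ⟨x, hx, rfl⟩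
    exact ⟨(e x).2, hclosed.isSing_apply e hx ((lt_add_one_iff.1 x.2).trans_lt (hgt _ (e x).2))⟩
  · exact otype_eq_of_orderIso
      ((iioAddOneOrderIsoSuccLimits hω.le hmul).trans ((hg.strictMonoOn _).orderIso g _))

/-- the base case of Lemma 3. -/
theorem closed_subset_of_singulars (S : GlobalSquare) (m : ℕ)
    (α : Cardinal) (hreg : α.IsRegular) (hunc : Cardinal.aleph0 < α)
    (C : Set Ordinal) (hclosed : IsClosedSet C)
    (hgt : ∀ x ∈ C, (succIt α m).ord < x)
    (hot : otype C = (succIt α m).ord + 1) :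
    ∃ D : Set Ordinal, D ⊆ C ∩ {β | IsSing β} ∧
      IsClosedSet D ∧ otype D = (succIt α m).ord + 1 :=
  closed_subset_of_singulars_general m α hunc C hclosed hgt hot
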